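/- arXiv:1110.5990 — 2 statements merged into one kernel-verified Lean document; each statement's English description precedes it below -/
import Mathlib

section
/- Suppose u : [a, b] → ℝ is absolutely continuous with u(b) = 0 and 0 ≤ a < b. Then ∫_a^b |u(r)|² dr ≤ 4 ∫_a^b |u'(r)|² r² dr. -/
/-!
Writing `u(r) = -∫_r^b u'`, it suffices to prove the dual Hardy inequality
`∫_0^∞ (∫_r^∞ f)² dr ≤ 4 ∫_0^∞ f(t)² t² dt` for `f ≥ 0`
(extend `|u'|` by zero outside `(a, b]`). Cauchy–Schwarz with the weight `t^{3/2}` gives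
`(∫_r^∞ f)² ≤ 2 r^{-1/2} ∫_r^∞ f(t)² t^{3/2} dt`; integrating in `r` and swapping the
integrals by Tonelli, the inner integral is `∫_0^t 2 r^{-1/2} dr = 4 t^{1/2}`, which turns
`t^{3/2}` into `4 t²`. All of this is done in `ℝ≥0∞`, so that no integrability is needed until
the very end.
-/

open MeasureTheory Set
open scoped ENNReal

theorem ENNReal.lintegral_mul_sq_le_sq_mul_sq {α : Type*} [MeasurableSpace α] {μ : Measure α}
    {f g : α → ℝ≥0∞} (hf : AEMeasurable f μ) (hg : AEMeasurable g μ) :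
    (∫⁻ a, f a * g a ∂μ) ^ 2 ≤ (∫⁻ a, f a ^ 2 ∂μ) * ∫⁻ a, g a ^ 2 ∂μ := by
  have holder := ENNReal.lintegral_mul_le_Lp_mul_Lq μ Real.HolderConjugate.two_two hf hg
  simp only [Pi.mul_apply, ENNReal.rpow_two] at holder
  calc (∫⁻ a, f a * g a ∂μ) ^ 2
      ≤ ((∫⁻ a, f a ^ 2 ∂μ) ^ (1 / 2 : ℝ) * (∫⁻ a, g a ^ 2 ∂μ) ^ (1 / 2 : ℝ)) ^ 2 := by
        gcongr
    _ = (∫⁻ a, f a ^ 2 ∂μ) * ∫⁻ a, g a ^ 2 ∂μ := by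
      rw [mul_pow, ← ENNReal.rpow_natCast, ← ENNReal.rpow_natCast, ← ENNReal.rpow_mul,
        ← ENNReal.rpow_mul]
      norm_num

theorem lintegral_Ioi_rpow_of_lt {p : ℝ} (hp : p < -1) {c : ℝ} (hc : 0 < c) :
    ∫⁻ t in Ioi c, ENNReal.ofReal (t ^ p) = ENNReal.ofReal (-c ^ (p + 1) / (p + 1)) := by
  rw [← integral_Ioi_rpow_of_lt hp hc, ofReal_integral_eq_lintegral_ofReal
    (integrableOn_Ioi_rpow_of_lt hp hc)]
  filter_upwards [ae_restrict_mem measurableSet_Ioi] with t ht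
  exact Real.rpow_nonneg (hc.trans ht).le _

theorem lintegral_Ioo_zero_rpow {p : ℝ} (hp : -1 < p) {c : ℝ} (hc : 0 ≤ c) :
    ∫⁻ t in Ioo 0 c, ENNReal.ofReal (t ^ p) = ENNReal.ofReal (c ^ (p + 1) / (p + 1)) := by
  rw [Measure.restrict_congr_set Ioo_ae_eq_Ioc, ← ofReal_integral_eq_lintegral_ofReal,
    ← intervalIntegral.integral_of_le hc, integral_rpow (Or.inl hp), Real.zero_rpow (by linarith),
    sub_zero]
  · exact (intervalIntegral.intervalIntegrable_rpow' hp).1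
  · filter_upwards [ae_restrict_mem measurableSet_Ioc] with t ht
    exact Real.rpow_nonneg ht.1.le _

theorem ENNReal.ofReal_rpow_sq {t : ℝ} (ht : 0 ≤ t) (p : ℝ) :
    ENNReal.ofReal (t ^ p) ^ 2 = ENNReal.ofReal (t ^ (2 * p)) := by
  rw [← ENNReal.ofReal_pow (Real.rpow_nonneg ht p), ← Real.rpow_natCast, ← Real.rpow_mul ht,
    mul_comm]
  norm_num

theorem sq_lintegral_Ioi_le {f : ℝ → ℝ≥0∞} (hf : AEMeasurable f) {r : ℝ} (hr : 0 < r) :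
    (∫⁻ t in Ioi r, f t) ^ 2 ≤
      ENNReal.ofReal (2 * r ^ (-1 / 2 : ℝ)) *
        ∫⁻ t in Ioi r, f t ^ 2 * ENNReal.ofReal (t ^ (3 / 2 : ℝ)) := by
  have hsplit : ∫⁻ t in Ioi r, f t =
      ∫⁻ t in Ioi r,
        f t * ENNReal.ofReal (t ^ (3 / 4 : ℝ)) * ENNReal.ofReal (t ^ (-3 / 4 : ℝ)) := by
    refine setLIntegral_congr_fun measurableSet_Ioi fun t ht => ?_
    have ht0 : 0 < t := hr.trans ht
    rw [mul_assoc, ← ENNReal.ofReal_mul (by positivity), ← Real.rpow_add ht0]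
    norm_num
  have hweight : ∫⁻ t in Ioi r, ENNReal.ofReal (t ^ (-3 / 4 : ℝ)) ^ 2 =
      ENNReal.ofReal (2 * r ^ (-1 / 2 : ℝ)) := by
    rw [setLIntegral_congr_fun measurableSet_Ioi fun t ht =>
      ENNReal.ofReal_rpow_sq (hr.trans ht).le _, lintegral_Ioi_rpow_of_lt (by norm_num) hr]
    congr 1
    norm_num
    ring
  have hmeas : AEMeasurable (fun t : ℝ => ENNReal.ofReal (t ^ (-3 / 4 : ℝ))) :=
    (measurable_id.pow_const _).ennreal_ofReal.aemeasurable
  calc (∫⁻ t in Ioi r, f t) ^ 2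
      ≤ (∫⁻ t in Ioi r, (f t * ENNReal.ofReal (t ^ (3 / 4 : ℝ))) ^ 2) *
          ∫⁻ t in Ioi r, ENNReal.ofReal (t ^ (-3 / 4 : ℝ)) ^ 2 := by
        rw [hsplit]
        exact ENNReal.lintegral_mul_sq_le_sq_mul_sq
          (hf.mul (by fun_prop)).restrict hmeas.restrict
    _ = _ := by
        rw [hweight, mul_comm]
        congr 1
        refine setLIntegral_congr_fun measurableSet_Ioi fun t ht => ?_
        rw [mul_pow, ENNReal.ofReal_rpow_sq (hr.trans ht).le]
        norm_num

theorem lintegral_Ioi_mul_lintegral_Ioi_swap {μ : Measure ℝ} [SFinite μ] {g h : ℝ → ℝ≥0∞}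
    (hg : AEMeasurable g μ) (hh : AEMeasurable h μ) (a : ℝ) :
    ∫⁻ r in Ioi a, h r * ∫⁻ t in Ioi r, g t ∂μ ∂μ =
      ∫⁻ t in Ioi a, g t * ∫⁻ r in Ioo a t, h r ∂μ ∂μ := by
  set T : Set (ℝ × ℝ) := {p | a < p.1 ∧ p.1 < p.2}
  have hT : MeasurableSet T :=
    (measurableSet_lt measurable_const measurable_fst).inter
      (measurableSet_lt measurable_fst measurable_snd)
  have hK : AEMeasurable (Function.uncurry fun r t => T.indicator (fun p => h p.1 * g p.2) (r, t))
      (μ.prod μ) :=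
    ((hh.comp_fst).mul hg.comp_snd).indicator hT
  have hleft : ∀ r, ∫⁻ t, T.indicator (fun p => h p.1 * g p.2) (r, t) ∂μ =
      (Ioi a).indicator (fun r => h r * ∫⁻ t in Ioi r, g t ∂μ) r := by
    intro r
    by_cases hr : a < r
    · simp only [indicator_of_mem (show r ∈ Ioi a from hr)]
      rw [← lintegral_indicator measurableSet_Ioi,
        ← lintegral_const_mul'' _ (hg.indicator measurableSet_Ioi)]
      congr 1 with t
      by_cases ht : r < t <;> simp [T, indicator, hr, ht]
    · simp [T, indicator, hr]
  have hright : ∀ t, ∫⁻ r, T.indicator (fun p => h p.1 * g p.2) (r, t) ∂μ =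
      (Ioi a).indicator (fun t => g t * ∫⁻ r in Ioo a t, h r ∂μ) t := by
    intro t
    by_cases ht : a < t
    · simp only [indicator_of_mem (show t ∈ Ioi a from ht)]
      rw [← lintegral_indicator measurableSet_Ioo,
        ← lintegral_const_mul'' _ (hh.indicator measurableSet_Ioo)]
      congr 1 with r
      by_cases hr : a < r <;> by_cases hrt : r < t <;> simp [T, indicator, hr, hrt, mul_comm]
    · simp only [indicator_of_notMem (show t ∉ Ioi a from ht)]
      convert lintegral_zero with r
      exact indicator_of_notMem (fun hrt => ht (hrt.1.trans hrt.2)) _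
  have hswap := lintegral_lintegral_swap hK
  simp only [hleft, hright] at hswap
  rwa [lintegral_indicator measurableSet_Ioi, lintegral_indicator measurableSet_Ioi] at hswap

theorem lintegral_sq_lintegral_Ioi_le {f : ℝ → ℝ≥0∞} (hf : AEMeasurable f) :
    ∫⁻ r in Ioi 0, (∫⁻ t in Ioi r, f t) ^ 2 ≤
      4 * ∫⁻ t in Ioi 0, f t ^ 2 * ENNReal.ofReal (t ^ 2) := by
  have hinner : ∀ t ∈ Ioi (0 : ℝ), ∫⁻ r in Ioo 0 t, ENNReal.ofReal (2 * r ^ (-1 / 2 : ℝ)) =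
      ENNReal.ofReal (4 * t ^ (1 / 2 : ℝ)) := by
    intro t ht
    simp_rw [ENNReal.ofReal_mul zero_le_two]
    rw [lintegral_const_mul' _ _ ENNReal.ofReal_ne_top,
      lintegral_Ioo_zero_rpow (by norm_num) ht.le, ← ENNReal.ofReal_mul zero_le_two]
    congr 1
    norm_num
    ring
  calc ∫⁻ r in Ioi 0, (∫⁻ t in Ioi r, f t) ^ 2
      ≤ ∫⁻ r in Ioi 0, ENNReal.ofReal (2 * r ^ (-1 / 2 : ℝ)) *
          ∫⁻ t in Ioi r, f t ^ 2 * ENNReal.ofReal (t ^ (3 / 2 : ℝ)) :=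
        setLIntegral_mono' measurableSet_Ioi fun r hr => sq_lintegral_Ioi_le hf hr
    _ = ∫⁻ t in Ioi 0, f t ^ 2 * ENNReal.ofReal (t ^ (3 / 2 : ℝ)) *
          ∫⁻ r in Ioo 0 t, ENNReal.ofReal (2 * r ^ (-1 / 2 : ℝ)) :=
        lintegral_Ioi_mul_lintegral_Ioi_swap (by fun_prop) (by fun_prop) 0
    _ = ∫⁻ t in Ioi 0, 4 * (f t ^ 2 * ENNReal.ofReal (t ^ 2)) := by
        refine setLIntegral_congr_fun measurableSet_Ioi fun t ht => ?_
        rw [hinner t ht, mul_assoc, ← ENNReal.ofReal_mul (Real.rpow_nonneg ht.le _),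
          mul_left_comm, ← Real.rpow_add ht, ENNReal.ofReal_mul zero_le_four, mul_left_comm]
        norm_num
    _ = 4 * ∫⁻ t in Ioi 0, f t ^ 2 * ENNReal.ofReal (t ^ 2) :=
        lintegral_const_mul' _ _ ENNReal.ofNat_ne_top

theorem lintegral_sq_lintegral_Ioc_le {a b : ℝ} (ha : 0 ≤ a) {f : ℝ → ℝ≥0∞}
    (hf : AEMeasurable f (volume.restrict (Ioc a b))) :
    ∫⁻ r in Ioc a b, (∫⁻ t in Ioc r b, f t) ^ 2 ≤
      4 * ∫⁻ t in Ioc a b, f t ^ 2 * ENNReal.ofReal (t ^ 2) := by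
  set F := (Ioc a b).indicator f
  have hF : AEMeasurable F := (aemeasurable_indicator_iff measurableSet_Ioc).2 hf
  have hFsq : (fun t => F t ^ 2 * ENNReal.ofReal (t ^ 2)) =
      (Ioc a b).indicator fun t => f t ^ 2 * ENNReal.ofReal (t ^ 2) := by
    ext t
    by_cases ht : t ∈ Ioc a b <;> simp [F, ht]
  calc ∫⁻ r in Ioc a b, (∫⁻ t in Ioc r b, f t) ^ 2
      ≤ ∫⁻ r in Ioc a b, (∫⁻ t in Ioi r, F t) ^ 2 := by
        refine setLIntegral_mono' measurableSet_Ioc fun r hr => ?_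
        gcongr ?_ ^ 2
        calc ∫⁻ t in Ioc r b, f t = ∫⁻ t in Ioc r b, F t :=
              setLIntegral_congr_fun measurableSet_Ioc fun t ht =>
                (indicator_of_mem (Ioc_subset_Ioc_left hr.1.le ht) f).symm
          _ ≤ ∫⁻ t in Ioi r, F t := lintegral_mono_set Ioc_subset_Ioi_self
    _ ≤ ∫⁻ r in Ioi 0, (∫⁻ t in Ioi r, F t) ^ 2 :=
        lintegral_mono_set fun r hr => ha.trans_lt hr.1
    _ ≤ 4 * ∫⁻ t in Ioi 0, F t ^ 2 * ENNReal.ofReal (t ^ 2) :=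
        lintegral_sq_lintegral_Ioi_le hF
    _ ≤ 4 * ∫⁻ t, F t ^ 2 * ENNReal.ofReal (t ^ 2) := by
        gcongr
        exact Measure.restrict_le_self
    _ = 4 * ∫⁻ t in Ioc a b, f t ^ 2 * ENNReal.ofReal (t ^ 2) := by
        rw [hFsq, lintegral_indicator measurableSet_Ioc]

theorem hardy_inequality_one_dim_general
    (a b : ℝ) (ha : 0 ≤ a) (hab : a < b)
    (u u' : ℝ → ℝ)
    (hu' : IntervalIntegrable u' volume a b)
    (hAC : ∀ x ∈ Set.Icc a b, u x = -∫ t in x..b, u' t)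
    (hu'sq : IntervalIntegrable (fun r => |u' r| ^ 2 * r ^ 2) volume a b) :
    (∫ r in a..b, |u r| ^ 2) ≤ 4 * ∫ r in a..b, |u' r| ^ 2 * r ^ 2 := by
  have hu_le : ∀ r ∈ Ioc a b, ‖u r‖ₑ ≤ ∫⁻ t in Ioc r b, ‖u' t‖ₑ := fun r hr => by
    rw [hAC r (Ioc_subset_Icc_self hr), enorm_neg, intervalIntegral.integral_of_le hr.2]
    exact enorm_integral_le_lintegral_enorm _
  have hrhs : ∫⁻ t in Ioc a b, ‖u' t‖ₑ ^ 2 * ENNReal.ofReal (t ^ 2) =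
      ENNReal.ofReal (∫ r in a..b, |u' r| ^ 2 * r ^ 2) := by
    rw [intervalIntegral.integral_of_le hab.le,
      ofReal_integral_eq_lintegral_ofReal hu'sq.1
        (Filter.Eventually.of_forall fun t => by positivity)]
    refine lintegral_congr fun t => ?_
    rw [ENNReal.ofReal_mul (sq_nonneg _), ENNReal.ofReal_pow (abs_nonneg _),
      Real.enorm_eq_ofReal_abs]
  have key :
      ‖∫ r in a..b, |u r| ^ 2‖ₑ ≤ ENNReal.ofReal (4 * ∫ r in a..b, |u' r| ^ 2 * r ^ 2) :=
    calc ‖∫ r in a..b, |u r| ^ 2‖ₑ ≤ ∫⁻ r in Ioc a b, ‖u r‖ₑ ^ 2 := by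
          rw [intervalIntegral.integral_of_le hab.le]
          refine (enorm_integral_le_lintegral_enorm _).trans_eq ?_
          simp [enorm_pow]
      _ ≤ ∫⁻ r in Ioc a b, (∫⁻ t in Ioc r b, ‖u' t‖ₑ) ^ 2 :=
          setLIntegral_mono' measurableSet_Ioc fun r hr => by gcongr; exact hu_le r hr
      _ ≤ 4 * ∫⁻ t in Ioc a b, ‖u' t‖ₑ ^ 2 * ENNReal.ofReal (t ^ 2) :=
          lintegral_sq_lintegral_Ioc_le ha hu'.1.aemeasurable.enorm
      _ = ENNReal.ofReal (4 * ∫ r in a..b, |u' r| ^ 2 * r ^ 2) := by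
          rw [hrhs, ENNReal.ofReal_mul zero_le_four, ENNReal.ofReal_ofNat]
  have hnonneg : 0 ≤ ∫ r in a..b, |u' r| ^ 2 * r ^ 2 :=
    intervalIntegral.integral_nonneg hab.le fun r _ => by positivity
  rw [← ofReal_norm, ENNReal.ofReal_le_ofReal_iff (mul_nonneg zero_le_four hnonneg)] at key
  exact (Real.le_norm_self _).trans key

/-- One-dimensional Hardy inequality: if `u` is absolutely continuous on
`[a, b] ⊂ [0, ∞)` (i.e. `u(x) = −∫_x^b u'` with `u'` integrable, so `u(b)=0`),
then `∫_a^b |u|² ≤ 4 ∫_a^b |u'|² r²`. -/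
theorem hardy_inequality_one_dim
    (a b : ℝ) (ha : 0 ≤ a) (hab : a < b)
    (u u' : ℝ → ℝ)
    (hu' : IntervalIntegrable u' volume a b)
    (hAC : ∀ x ∈ Set.Icc a b, u x = -∫ t in x..b, u' t)
    (hub : u b = 0)
    (husq : IntervalIntegrable (fun r => |u r| ^ 2) volume a b)
    (hu'sq : IntervalIntegrable (fun r => |u' r| ^ 2 * r ^ 2) volume a b) :
    (∫ r in a..b, |u r| ^ 2) ≤ 4 * ∫ r in a..b, |u' r| ^ 2 * r ^ 2 :=
  hardy_inequality_one_dim_general a b ha hab u u' hu' hAC hu'sq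
end

section
/- Let ψ₀ > 0, F₀ ∈ ℝ, F₁ ∈ ℂ with F₁ ≠ 0, and c, C > 0. Suppose that for all small ε > 0: (i) for |η − π| ≥ ψ₀ε^{3/2}, Λ₁ᵉ(η) ≤ π² − 2πψ₀ε^{3/2} + ψ₀²ε³ + Cε³ and Λ₂ᵉ(η) ≥ π² + 2πψ₀ε^{3/2} + ψ₀²ε³ − Cε^{3−α} for some α ∈ (0, 1/2]; (ii) for η = π + ψε³ with |ψ|ε^{3/2} ≤ ψ₀, |Λ±ᵉ(η) − π² − ε³(F₀ ± √(4π²ψ² + |F₁|²))| ≤ cε^{7/2}. Then there exists ε₀ > 0 such that for all ε ∈ (0, ε₀] and all η ∈ [0, 2π), neither Λ₁ᵉ(η) nor Λ₂ᵉ(η) lies in the interval (π² + (F₀ − |F₁|)ε³ + cε^{7/2}, π² + (F₀ + |F₁|)ε³ − cε^{7/2}). -/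
/-!
Away from `η = π` the first band lies below `π² - 2πψ₀ε^{3/2} + O(ε³)` and the second above
`π² + 2πψ₀ε^{3/2} + O(ε^{3-α})`; since `α < 3/2`, for small `ε` the `ε^{3/2}` term dominates and
both bands miss the window, which is only `O(ε³)` away from `π²`. Near `η = π` the two branches are
`π² + ε³(F₀ ∓ √(4π²ψ² + |F₁|²)) + O(ε^{7/2})`, and the square root is at least `|F₁|`.
-/

open Real Filter Topology Asymptotics Set

theorem rpow_isLittleO_rpow_nhdsGT_zero {p q : ℝ} (hpq : p < q) :
    (fun x : ℝ => x ^ q) =o[𝓝[>] 0] fun x => x ^ p := by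
  have hlim : Tendsto (fun x : ℝ => x ^ (q - p)) (𝓝[>] 0) (𝓝 0) := by
    have := (continuousAt_rpow_const 0 (q - p) (Or.inr (sub_nonneg.2 hpq.le))).tendsto
    rw [zero_rpow (sub_ne_zero.2 hpq.ne')] at this
    exact this.mono_left nhdsWithin_le_nhds
  refine (isLittleO_iff_tendsto' ?_).2 (hlim.congr' ?_)
  · filter_upwards [self_mem_nhdsWithin] with x (hx : 0 < x) h
    exact absurd h (rpow_pos_of_pos hx p).ne'
  · filter_upwards [self_mem_nhdsWithin] with x (hx : 0 < x)
    rw [rpow_sub hx]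

theorem pow_isLittleO_rpow_nhdsGT_zero {p : ℝ} {n : ℕ} (hpn : p < n) :
    (fun x : ℝ => x ^ n) =o[𝓝[>] 0] fun x => x ^ p := by
  simpa only [rpow_natCast] using rpow_isLittleO_rpow_nhdsGT_zero hpn

theorem eventually_le_mul_rpow_of_isLittleO {f : ℝ → ℝ} {p a : ℝ}
    (hf : f =o[𝓝[>] 0] fun x => x ^ p) (ha : 0 < a) : ∀ᶠ x in 𝓝[>] 0, f x ≤ a * x ^ p := by
  filter_upwards [hf.bound ha, self_mem_nhdsWithin] with x hx (hx0 : 0 < x)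
  rw [norm_of_nonneg (rpow_nonneg hx0.le p)] at hx
  exact (le_abs_self _).trans hx

theorem exists_mul_sq_eq_of_abs_le {x t ψ₀ : ℝ} (ht : 0 < t) (hx : |x| ≤ ψ₀ * t) :
    ∃ ψ, |ψ| * t ≤ ψ₀ ∧ ψ * t ^ 2 = x := by
  refine ⟨x / t ^ 2, ?_, div_mul_cancel₀ x (by positivity)⟩
  rw [abs_div, abs_of_pos (pow_pos ht 2), div_mul_eq_mul_div, div_le_iff₀ (pow_pos ht 2)]
  nlinarith

theorem rpow_three_halves_sq {x : ℝ} (hx : 0 ≤ x) : (x ^ ((3 : ℝ) / 2)) ^ 2 = x ^ 3 := by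
  rw [← rpow_mul_natCast hx, ← rpow_natCast]
  norm_num

theorem le_sqrt_add_sq {a b : ℝ} (ha : 0 ≤ a) : b ≤ √(a + b ^ 2) :=
  le_sqrt_of_sq_le (by linarith)

theorem gap_detection_general
    (Λ1 Λ2 : ℝ → ℝ → ℝ)  -- Λᵢ ε η
    (ψ₀ : ℝ) (hψ₀ : 0 < ψ₀) (F₀ : ℝ) (F₁ : ℂ)
    (c C : ℝ)
    (α : ℝ) (hα : α ∈ Set.Ioc (0 : ℝ) (1 / 2))
    (ε₁ : ℝ) (hε₁ : 0 < ε₁)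
    -- (i) estimates far from π:
    (hfar : ∀ ε : ℝ, 0 < ε → ε ≤ ε₁ → ∀ η ∈ Set.Ico (0 : ℝ) (2 * π),
      ψ₀ * ε ^ ((3 : ℝ) / 2) ≤ |η - π| →
      Λ1 ε η ≤ π ^ 2 - 2 * π * ψ₀ * ε ^ ((3 : ℝ) / 2) + ψ₀ ^ 2 * ε ^ 3 + C * ε ^ 3 ∧
      Λ2 ε η ≥ π ^ 2 + 2 * π * ψ₀ * ε ^ ((3 : ℝ) / 2) + ψ₀ ^ 2 * ε ^ 3 - C * ε ^ ((3 : ℝ) - α))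
    -- (ii) asymptotics near π:
    (hnear : ∀ ε : ℝ, 0 < ε → ε ≤ ε₁ → ∀ ψ : ℝ, |ψ| * ε ^ ((3 : ℝ) / 2) ≤ ψ₀ →
      π + ψ * ε ^ 3 ∈ Set.Ico (0 : ℝ) (2 * π) →
      |Λ1 ε (π + ψ * ε ^ 3) - π ^ 2 -
        ε ^ 3 * (F₀ - Real.sqrt (4 * π ^ 2 * ψ ^ 2 + ‖F₁‖ ^ 2))| ≤ c * ε ^ ((7 : ℝ) / 2) ∧
      |Λ2 ε (π + ψ * ε ^ 3) - π ^ 2 -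
        ε ^ 3 * (F₀ + Real.sqrt (4 * π ^ 2 * ψ ^ 2 + ‖F₁‖ ^ 2))| ≤ c * ε ^ ((7 : ℝ) / 2)) :
    ∃ ε₀ : ℝ, 0 < ε₀ ∧ ∀ ε : ℝ, 0 < ε → ε ≤ ε₀ → ∀ η ∈ Set.Ico (0 : ℝ) (2 * π),
      Λ1 ε η ∉ Set.Ioo (π ^ 2 + (F₀ - ‖F₁‖) * ε ^ 3 + c * ε ^ ((7 : ℝ) / 2))
                        (π ^ 2 + (F₀ + ‖F₁‖) * ε ^ 3 - c * ε ^ ((7 : ℝ) / 2)) ∧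
      Λ2 ε η ∉ Set.Ioo (π ^ 2 + (F₀ - ‖F₁‖) * ε ^ 3 + c * ε ^ ((7 : ℝ) / 2))
                        (π ^ 2 + (F₀ + ‖F₁‖) * ε ^ 3 - c * ε ^ ((7 : ℝ) / 2)) := by
  have h3 := pow_isLittleO_rpow_nhdsGT_zero (p := 3 / 2) (n := 3) (by norm_num)
  have h7 := rpow_isLittleO_rpow_nhdsGT_zero (p := 3 / 2) (q := 7 / 2) (by norm_num)
  have h3α := rpow_isLittleO_rpow_nhdsGT_zero (p := 3 / 2) (q := 3 - α) (by linarith [hα.2])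
  have hfar₁ := eventually_le_mul_rpow_of_isLittleO
    ((h3.const_mul_left (ψ₀ ^ 2 + C - F₀ + ‖F₁‖)).sub (h7.const_mul_left c))
    (by positivity : 0 < 2 * π * ψ₀)
  have hfar₂ := eventually_le_mul_rpow_of_isLittleO
    (((h3.const_mul_left (F₀ + ‖F₁‖ - ψ₀ ^ 2)).sub (h7.const_mul_left c)).add
      (h3α.const_mul_left C))
    (by positivity : 0 < 2 * π * ψ₀)
  obtain ⟨ε₀, hε₀, hsmall⟩ :=
    mem_nhdsGT_iff_exists_Ioc_subset.1
      (((eventually_lt_nhds hε₁).filter_mono nhdsWithin_le_nhds).and (hfar₁.and hfar₂))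
  refine ⟨ε₀, hε₀, fun ε hε hεε₀ η hη => ?_⟩
  obtain ⟨hεε₁, hrem₁, hrem₂⟩ := hsmall ⟨hε, hεε₀⟩
  rcases le_or_gt (ψ₀ * ε ^ ((3 : ℝ) / 2)) |η - π| with hη_far | hη_near
  · obtain ⟨hΛ1, hΛ2⟩ := hfar ε hε hεε₁.le η hη hη_far
    exact ⟨notMem_Ioo_of_le (by linarith), notMem_Ioo_of_ge (by linarith)⟩
  · obtain ⟨ψ, hψ, hψη⟩ := exists_mul_sq_eq_of_abs_le (rpow_pos_of_pos hε _) hη_near.le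
    rw [rpow_three_halves_sq hε.le] at hψη
    obtain rfl : η = π + ψ * ε ^ 3 := by linarith
    obtain ⟨hΛ1, hΛ2⟩ := hnear ε hε hεε₁.le ψ hψ hη
    have hsqrt := mul_le_mul_of_nonneg_left
      (le_sqrt_add_sq (by positivity : 0 ≤ 4 * π ^ 2 * ψ ^ 2) (b := ‖F₁‖)) (pow_pos hε 3).le
    rw [abs_le] at hΛ1 hΛ2
    exact ⟨notMem_Ioo_of_le (by linarith), notMem_Ioo_of_ge (by linarith)⟩

/-- Gap detection: combining the estimates far from `η = π` (Theorem 4.2) and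
near `η = π` (Theorem 4.6), for small `ε` neither of the first two eigenvalue
curves enters the interval
`(π² + (F₀ − |F₁|)ε³ + cε^{7/2}, π² + (F₀ + |F₁|)ε³ − cε^{7/2})`. -/
theorem gap_detection
    (Λ1 Λ2 : ℝ → ℝ → ℝ)  -- Λᵢ ε η
    (ψ₀ : ℝ) (hψ₀ : 0 < ψ₀) (F₀ : ℝ) (F₁ : ℂ) (hF₁ : F₁ ≠ 0)
    (c C : ℝ) (hc : 0 < c) (hC : 0 < C)
    (α : ℝ) (hα : α ∈ Set.Ioc (0 : ℝ) (1 / 2))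
    (ε₁ : ℝ) (hε₁ : 0 < ε₁)
    -- (i) estimates far from π:
    (hfar : ∀ ε : ℝ, 0 < ε → ε ≤ ε₁ → ∀ η ∈ Set.Ico (0 : ℝ) (2 * π),
      ψ₀ * ε ^ ((3 : ℝ) / 2) ≤ |η - π| →
      Λ1 ε η ≤ π ^ 2 - 2 * π * ψ₀ * ε ^ ((3 : ℝ) / 2) + ψ₀ ^ 2 * ε ^ 3 + C * ε ^ 3 ∧
      Λ2 ε η ≥ π ^ 2 + 2 * π * ψ₀ * ε ^ ((3 : ℝ) / 2) + ψ₀ ^ 2 * ε ^ 3 - C * ε ^ ((3 : ℝ) - α))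
    -- (ii) asymptotics near π:
    (hnear : ∀ ε : ℝ, 0 < ε → ε ≤ ε₁ → ∀ ψ : ℝ, |ψ| * ε ^ ((3 : ℝ) / 2) ≤ ψ₀ →
      π + ψ * ε ^ 3 ∈ Set.Ico (0 : ℝ) (2 * π) →
      |Λ1 ε (π + ψ * ε ^ 3) - π ^ 2 -
        ε ^ 3 * (F₀ - Real.sqrt (4 * π ^ 2 * ψ ^ 2 + ‖F₁‖ ^ 2))| ≤ c * ε ^ ((7 : ℝ) / 2) ∧
      |Λ2 ε (π + ψ * ε ^ 3) - π ^ 2 -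
        ε ^ 3 * (F₀ + Real.sqrt (4 * π ^ 2 * ψ ^ 2 + ‖F₁‖ ^ 2))| ≤ c * ε ^ ((7 : ℝ) / 2)) :
    ∃ ε₀ : ℝ, 0 < ε₀ ∧ ∀ ε : ℝ, 0 < ε → ε ≤ ε₀ → ∀ η ∈ Set.Ico (0 : ℝ) (2 * π),
      Λ1 ε η ∉ Set.Ioo (π ^ 2 + (F₀ - ‖F₁‖) * ε ^ 3 + c * ε ^ ((7 : ℝ) / 2))
                        (π ^ 2 + (F₀ + ‖F₁‖) * ε ^ 3 - c * ε ^ ((7 : ℝ) / 2)) ∧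
      Λ2 ε η ∉ Set.Ioo (π ^ 2 + (F₀ - ‖F₁‖) * ε ^ 3 + c * ε ^ ((7 : ℝ) / 2))
                        (π ^ 2 + (F₀ + ‖F₁‖) * ε ^ 3 - c * ε ^ ((7 : ℝ) / 2)) :=
  gap_detection_general Λ1 Λ2 ψ₀ hψ₀ F₀ F₁ c C α hα ε₁ hε₁ hfar hnear
end
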